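/- arXiv:1405.1483 — 9 statements merged into one kernel-verified Lean document; each statement's English description precedes it below -/
import Mathlib

section
/- Let A be an N×n real matrix with N ≥ 2n−1 such that every n×n submatrix of A is invertible. Then the map M^A sending x to the vector of absolute values (|a_1·x|, ..., |a_N·x|) is injective up to sign: if |Ax| = |A x̂| entrywise, then x = x̂ or x = −x̂. -/
open Matrix

/-- The rank* condition: any `n` rows of `A` are linearly independent. -/
def rankStar {N n : ℕ} (A : Matrix (Fin N) (Fin n) ℝ) : Prop :=
  ∀ s : Finset (Fin N), s.card = n → LinearIndependent ℝ (fun i : s => A i.1)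

lemma rankStar_key {N n : ℕ} {A : Matrix (Fin N) (Fin n) ℝ} (hA : rankStar A)
    {v : Fin n → ℝ} {s : Finset (Fin N)} (hs : s.card = n)
    (hv : ∀ i ∈ s, A.mulVec v i = 0) : v = 0 := by
  have li := hA s hs
  let e : s ≃ Fin n := s.equivFinOfCardEq hs
  let B : Matrix (Fin n) (Fin n) ℝ := fun i => A (e.symm i).1
  have liB : LinearIndependent ℝ (fun i => B i) := li.comp e.symm e.symm.injective
  have hB : Function.Injective B.mulVec :=
    Matrix.mulVec_injective_iff_isUnit.2 (Matrix.linearIndependent_rows_iff_isUnit.1 liB)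
  have h0 : B.mulVec v = 0 := by
    funext i
    exact hv (e.symm i).1 (e.symm i).2
  have := hB (by rw [h0, Matrix.mulVec_zero] : B.mulVec v = B.mulVec 0)
  exact this

theorem stmt0 {N n : ℕ} (A : Matrix (Fin N) (Fin n) ℝ)
    (hN : N ≥ 2 * n - 1) (hA : rankStar A)
    (x xhat : Fin n → ℝ)
    (h : ∀ i, |A.mulVec x i| = |A.mulVec xhat i|) :
    x = xhat ∨ x = -xhat := by
  classical
  set S : Finset (Fin N) := Finset.univ.filter (fun i => A.mulVec (x - xhat) i = 0) with hS
  set T : Finset (Fin N) := Finset.univ.filter (fun i => A.mulVec (x + xhat) i = 0) with hT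
  have hcover : ∀ i : Fin N, i ∈ S ∨ i ∈ T := by
    intro i
    have hi := h i
    rcases abs_eq_abs.1 hi with h1 | h1
    · left
      simp only [hS, Finset.mem_filter, Finset.mem_univ, true_and]
      simp [Matrix.mulVec_sub, h1]
    · right
      simp only [hT, Finset.mem_filter, Finset.mem_univ, true_and]
      simp [Matrix.mulVec_add, h1]
  have hcard : S.card + T.card ≥ N := by
    have : (Finset.univ : Finset (Fin N)) ⊆ S ∪ T := by
      intro i _
      rcases hcover i with hi | hi
      · exact Finset.mem_union_left _ hi
      · exact Finset.mem_union_right _ hi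
    calc N = (Finset.univ : Finset (Fin N)).card := (Finset.card_fin N).symm
      _ ≤ (S ∪ T).card := Finset.card_le_card this
      _ ≤ S.card + T.card := Finset.card_union_le _ _
  have hor : n ≤ S.card ∨ n ≤ T.card := by omega
  rcases hor with hc | hc
  · left
    obtain ⟨s, hsub, hscard⟩ := Finset.exists_subset_card_eq hc
    have := rankStar_key hA hscard (fun i hi => by
      have := hsub hi
      simpa [hS] using (Finset.mem_filter.1 this).2)
    have hx : x - xhat = 0 := this
    have := sub_eq_zero.1 hx
    exact this
  · right
    obtain ⟨s, hsub, hscard⟩ := Finset.exists_subset_card_eq hc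
    have := rankStar_key hA hscard (fun i hi => by
      have := hsub hi
      simpa [hT] using (Finset.mem_filter.1 this).2)
    have hx : x + xhat = 0 := this
    exact eq_neg_of_add_eq_zero_left hx
end

section
/- If A ∈ ℝ^{N×n} with N = 2n−2 satisfies the rank* condition, then there exist vectors x, x̂ ∈ ℝ^n with x ≠ ±x̂ such that |Ax| = |A x̂| entrywise, provided n ≥ 2. (Take u orthogonal to the first n−1 rows and v orthogonal to the last n−1 rows; then x = u+v and x̂ = u−v work.) -/
open Matrix

lemma exists_orth {n : ℕ} (hn : 2 ≤ n) (B : Matrix (Fin (n - 1)) (Fin n) ℝ) :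
    ∃ u : Fin n → ℝ, u ≠ 0 ∧ B.mulVec u = 0 := by
  have h : LinearMap.ker B.mulVecLin ≠ ⊥ := by
    apply LinearMap.ker_ne_bot_of_finrank_lt
    simp only [Module.finrank_pi, Fintype.card_fin]
    omega
  obtain ⟨u, hu, hu0⟩ := Submodule.exists_mem_ne_zero_of_ne_bot h
  exact ⟨u, hu0, hu⟩

theorem stmt1 {n : ℕ} (hn : 2 ≤ n) (A : Matrix (Fin (2 * n - 2)) (Fin n) ℝ)
    (hA : rankStar A) :
    ∃ x xhat : Fin n → ℝ, x ≠ xhat ∧ x ≠ -xhat ∧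
      ∀ i, |A.mulVec x i| = |A.mulVec xhat i| := by
  obtain ⟨u, hu0, hu⟩ := exists_orth hn
    (A.submatrix (fun j : Fin (n - 1) => (⟨j.1, by omega⟩ : Fin (2 * n - 2))) id)
  obtain ⟨v, hv0, hv⟩ := exists_orth hn
    (A.submatrix (fun j : Fin (n - 1) => (⟨n - 1 + j.1, by omega⟩ : Fin (2 * n - 2))) id)
  refine ⟨u + v, u - v, ?_, ?_, ?_⟩
  · intro h
    apply hv0
    have : (2 : ℝ) • v = 0 := by
      funext i
      have := congrFun h i
      simp only [Pi.add_apply, Pi.sub_apply] at this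
      simp [Pi.smul_apply]; linarith
    simpa using (smul_eq_zero.mp this).resolve_left (by norm_num)
  · intro h
    apply hu0
    have : (2 : ℝ) • u = 0 := by
      funext i
      have := congrFun h i
      simp only [Pi.add_apply, Pi.neg_apply, Pi.sub_apply] at this
      simp [Pi.smul_apply]; linarith
    simpa using (smul_eq_zero.mp this).resolve_left (by norm_num)
  · intro i
    rw [mulVec_add, mulVec_sub]
    by_cases hi : i.1 < n - 1
    · have h0 : A.mulVec u i = 0 := by
        have := congrFun hu ⟨i.1, hi⟩
        simpa [mulVec, submatrix] using this
      simp [Pi.add_apply, Pi.sub_apply, h0, abs_neg]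
    · have h0 : A.mulVec v i = 0 := by
        have h2 : i.1 < 2 * n - 2 := i.2
        have := congrFun hv ⟨i.1 - (n - 1), by omega⟩
        have hcast : (⟨n - 1 + (i.1 - (n - 1)), by omega⟩ : Fin (2 * n - 2)) = i := by
          ext; simp; omega
        simpa [mulVec, submatrix, hcast] using this
      simp [Pi.add_apply, Pi.sub_apply, h0]
end

section
/- Let x_0 ∈ ℝ^n with all entries nonzero, and let A consist of the sensing vectors e_1,...,e_n together with a_{n+1} whose j-th entry satisfies a_{n+1}(j)·x_0(j) > 0 for all j. Then the only positive semidefinite n×n matrix X satisfying a_i^T X a_i = (a_i·x_0)^2 for all i = 1,...,n+1 is X = x_0 x_0^T, i.e., the feasible set is a single rank-one matrix. -/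
open Matrix

theorem stmt2 {n : ℕ} (x0 : Fin n → ℝ) (hx0 : ∀ j, x0 j ≠ 0)
    (a : Fin n → ℝ) (ha : ∀ j, a j * x0 j > 0)
    (X : Matrix (Fin n) (Fin n) ℝ) (hX : X.PosSemidef)
    (hdiag : ∀ j, X j j = (x0 j) ^ 2)
    (hlast : a ⬝ᵥ X.mulVec a = (a ⬝ᵥ x0) ^ 2) :
    X = fun i j => x0 i * x0 j := by
  have hsym : ∀ i j, X j i = X i j := fun i j => by
    simpa using hX.1.apply i j
  -- Cauchy–Schwarz for PSD matrices
  have hCS : ∀ i j, (X i j) ^ 2 ≤ X i i * X j j := by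
    intro i j
    rcases eq_or_ne i j with rfl | hij
    · rw [sq]
    · have hq : ∀ t : ℝ, 0 ≤ X i i * (t * t) + (2 * X i j) * t + X j j := by
        intro t
        have h0 := hX.dotProduct_mulVec_nonneg (t • (Pi.single i 1 : Fin n → ℝ) + (Pi.single j 1 : Fin n → ℝ))
        simp only [star_trivial, mulVec_add, mulVec_smul, mulVec_single, dotProduct_add,
          add_dotProduct, smul_dotProduct, dotProduct_smul, dotProduct_single,
          single_dotProduct, smul_eq_mul, mul_one, Pi.add_apply, Pi.smul_apply,
          Pi.single_eq_same, Pi.single_eq_of_ne hij, Pi.single_eq_of_ne (Ne.symm hij)] at h0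
        simp only [Matrix.col_apply, MulOpposite.op_one, one_smul, one_mul] at h0
        rw [hsym i j] at h0
        nlinarith [h0]
      have hd := discrim_le_zero hq
      rw [discrim] at hd
      nlinarith [hd]
  set f : Fin n → Fin n → ℝ := fun i j => a i * a j * (x0 i * x0 j - X i j) with hf
  have hfnn : ∀ i j, 0 ≤ f i j := by
    intro i j
    have h1 : (X i j) ^ 2 ≤ (x0 i) ^ 2 * (x0 j) ^ 2 := by
      have := hCS i j; rw [hdiag i, hdiag j] at this; exact this
    have h2 := ha i
    have h3 := ha j
    simp only [hf]
    nlinarith [mul_pos h2 h3, sq_nonneg (a i * a j), sq_nonneg (a i * a j * X i j - a i * x0 i * (a j * x0 j)), mul_le_mul_of_nonneg_left h1 (sq_nonneg (a i * a j))]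
  have hsum : ∑ i, ∑ j, f i j = 0 := by
    have e1 : a ⬝ᵥ X.mulVec a = ∑ i, ∑ j, a i * a j * X i j := by
      simp only [dotProduct, mulVec, Finset.mul_sum]
      exact Finset.sum_congr rfl fun i _ => Finset.sum_congr rfl fun j _ => by ring
    have e2 : (a ⬝ᵥ x0) ^ 2 = ∑ i, ∑ j, a i * a j * (x0 i * x0 j) := by
      rw [sq, dotProduct, Finset.sum_mul_sum]
      exact Finset.sum_congr rfl fun i _ => Finset.sum_congr rfl fun j _ => by ring
    have : ∑ i, ∑ j, f i j = (a ⬝ᵥ x0) ^ 2 - a ⬝ᵥ X.mulVec a := by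
      rw [e1, e2, ← Finset.sum_sub_distrib]
      refine Finset.sum_congr rfl fun i _ => ?_
      rw [← Finset.sum_sub_distrib]
      exact Finset.sum_congr rfl fun j _ => by simp only [hf]; ring
    rw [this, hlast]; ring
  have hzero : ∀ i j, f i j = 0 := by
    have houter := (Finset.sum_eq_zero_iff_of_nonneg
      (fun i _ => Finset.sum_nonneg fun j _ => hfnn i j)).mp hsum
    intro i j
    exact (Finset.sum_eq_zero_iff_of_nonneg (fun j _ => hfnn i j)).mp
      (houter i (Finset.mem_univ i)) j (Finset.mem_univ j)
  funext i j
  have h := hzero i j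
  have hai : a i ≠ 0 := fun h' => by simpa [h'] using ha i
  have haj : a j ≠ 0 := fun h' => by simpa [h'] using ha j
  simp only [hf] at h
  have : x0 i * x0 j - X i j = 0 := by
    rcases mul_eq_zero.mp h with h' | h'
    · exact absurd h' (mul_ne_zero hai haj)
    · exact h'
  linarith
end

section
/- Let X be an n×n real symmetric positive semidefinite matrix with X_{ii} = 1 for all i, X_{i,i+1} = X_{i+1,i} = 1 for i = 1,...,n−1. Then X is the all-ones matrix X_{ij} = 1 for all i,j. -/
open Matrix

theorem stmt3 {n : ℕ} (X : Matrix (Fin n) (Fin n) ℝ) (hX : X.PosSemidef)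
    (hdiag : ∀ i, X i i = 1)
    (hband : ∀ i j : Fin n, (i : ℕ) + 1 = (j : ℕ) → X i j = 1) :
    ∀ i j, X i j = 1 := by
  have hsym : ∀ i j, X j i = X i j := fun i j => by
    have h := hX.1.apply j i
    simpa using h.symm
  -- adjacent columns are equal
  have hadj : ∀ (i j : Fin n), (i : ℕ) + 1 = (j : ℕ) → ∀ k, X k i = X k j := by
    intro i j hij k
    set x : Fin n → ℝ := Pi.single i 1 - Pi.single j 1 with hx
    have hij' : i ≠ j := by
      intro h; rw [h] at hij; omega
    have hquad : star x ⬝ᵥ X *ᵥ x = 0 := by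
      have hxx : star x = x := by simp [hx]
      rw [hxx, hx, mulVec_sub, dotProduct_sub, sub_dotProduct, sub_dotProduct,
        single_dotProduct, single_dotProduct, single_dotProduct, single_dotProduct]
      simp [mulVec_single, hdiag, hband i j hij, hsym i j, hband i j hij]
    have hmv := (hX.dotProduct_mulVec_zero_iff x).mp hquad
    have hk := congrFun hmv k
    rw [hx, mulVec_sub] at hk
    simp [mulVec_single] at hk
    linarith
  intro i j
  -- every column equals column 0
  have hn : 0 < n := i.pos
  have hcol : ∀ (m : ℕ) (hm : m < n) (k : Fin n), X k ⟨m, hm⟩ = X k ⟨0, hn⟩ := by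
    intro m
    induction m with
    | zero => intro hm k; rfl
    | succ p ih =>
      intro hm k
      have hp : p < n := Nat.lt_of_succ_lt hm
      have := hadj ⟨p, hp⟩ ⟨p + 1, hm⟩ rfl k
      rw [← this, ih hp k]
    
  have h1 : X i j = X i ⟨0, hn⟩ := by
    have := hcol j.val (by omega) i
    simpa using this
  have h2 : X i i = X i ⟨0, hn⟩ := by
    have := hcol i.val (by omega) i
    simpa using this
  rw [h1, ← h2, hdiag]
end

section
/- Let A_I ∈ ℝ^{N_I × n}, let x_0 be a unit vector, and let x_min be a unit right-singular vector of A_I corresponding to its least singular value. Write α_1 = |x_0 · x_min| and let x_1 be any unit vector orthogonal to x_0 lying in the span of x_min and x_0 (specifically x_1 = −√(1−α_1²) x_min + α_1 w, where x_0 = α_1 x_min + √(1−α_1²) w with w a unit vector orthogonal to x_min). Then (2 − α_1²)‖A_I x_0‖² ≥ (1 − α_1²)‖A_I x_1‖². -/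
open Matrix

lemma stmt10_expand {NI n : ℕ} (A : Matrix (Fin NI) (Fin n) ℝ)
    (u v : Fin n → ℝ) (a b : ℝ) :
    ∑ i, (A.mulVec (a • u + b • v) i) ^ 2
      = a ^ 2 * ∑ i, (A.mulVec u i) ^ 2
        + 2 * a * b * ∑ i, A.mulVec u i * A.mulVec v i
        + b ^ 2 * ∑ i, (A.mulVec v i) ^ 2 := by
  simp only [Matrix.mulVec_add, Matrix.mulVec_smul, Pi.add_apply, Pi.smul_apply, smul_eq_mul]
  rw [Finset.mul_sum, Finset.mul_sum, Finset.mul_sum, ← Finset.sum_add_distrib,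
    ← Finset.sum_add_distrib]
  exact Finset.sum_congr rfl (fun i _ => by ring)

set_option maxHeartbeats 1600000 in
theorem stmt10 {NI n : ℕ} (A : Matrix (Fin NI) (Fin n) ℝ)
    (x0 xmin w x1 : Fin n → ℝ) (α1 : ℝ)
    (hx0 : ∑ i, (x0 i) ^ 2 = 1)
    (hxmin : ∑ i, (xmin i) ^ 2 = 1)
    (hw : ∑ i, (w i) ^ 2 = 1)
    (hwperp : w ⬝ᵥ xmin = 0)
    (hmin : ∀ x : Fin n → ℝ, ∑ i, (x i) ^ 2 = 1 →
      ∑ i, (A.mulVec xmin i) ^ 2 ≤ ∑ i, (A.mulVec x i) ^ 2)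
    (hα1 : α1 = |x0 ⬝ᵥ xmin|)
    (hdec : x0 = α1 • xmin + Real.sqrt (1 - α1 ^ 2) • w)
    (hx1 : x1 = (-Real.sqrt (1 - α1 ^ 2)) • xmin + α1 • w) :
    (1 - α1 ^ 2) * ∑ i, (A.mulVec x1 i) ^ 2
      ≤ (2 - α1 ^ 2) * ∑ i, (A.mulVec x0 i) ^ 2 := by
  set b := Real.sqrt (1 - α1 ^ 2) with hb
  set m := ∑ i, (A.mulVec xmin i) ^ 2 with hm
  set W := ∑ i, (A.mulVec w i) ^ 2 with hW
  set c := ∑ i, A.mulVec xmin i * A.mulVec w i with hc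
  clear_value b m W c
  have hperp : ∑ i, xmin i * w i = 0 := by
    have := hwperp
    simpa [dotProduct, mul_comm] using this
  -- α1^2 + b^2 = 1
  have hab : α1 ^ 2 + b ^ 2 = 1 := by
    have : ∑ i, (α1 * xmin i + b * w i) ^ 2 = 1 := by
      rw [← hx0, hdec]; simp [Pi.add_apply, Pi.smul_apply, smul_eq_mul]
    have hexp : ∑ i, (α1 * xmin i + b * w i) ^ 2
        = α1 ^ 2 * ∑ i, (xmin i) ^ 2 + 2 * α1 * b * ∑ i, xmin i * w i
          + b ^ 2 * ∑ i, (w i) ^ 2 := by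
      rw [Finset.mul_sum, Finset.mul_sum, Finset.mul_sum, ← Finset.sum_add_distrib,
        ← Finset.sum_add_distrib]
      exact Finset.sum_congr rfl (fun i _ => by ring)
    rw [hexp, hxmin, hw, hperp] at this
    linarith
  have hmnn : 0 ≤ m := by
    rw [hm]; exact Finset.sum_nonneg (fun i _ => sq_nonneg _)
  have hmW : m ≤ W := by
    rw [hW]; exact hmin w hw
  -- cross term vanishes
  have hkey : ∀ t : ℝ, 0 ≤ 2 * t * c + t ^ 2 * (W - m) := by
    intro t
    have ht : (0:ℝ) < 1 + t ^ 2 := by positivity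
    set s := (Real.sqrt (1 + t ^ 2))⁻¹ with hs
    have hs2 : s ^ 2 = (1 + t ^ 2)⁻¹ := by
      rw [hs, inv_pow, Real.sq_sqrt ht.le]
    have hunit : ∑ i, ((s • xmin + (s * t) • w) i) ^ 2 = 1 := by
      have hexp : ∑ i, (s * xmin i + (s * t) * w i) ^ 2
          = s ^ 2 * ∑ i, (xmin i) ^ 2 + 2 * s * (s * t) * ∑ i, xmin i * w i
            + (s * t) ^ 2 * ∑ i, (w i) ^ 2 := by
        rw [Finset.mul_sum, Finset.mul_sum, Finset.mul_sum, ← Finset.sum_add_distrib,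
          ← Finset.sum_add_distrib]
        exact Finset.sum_congr rfl (fun i _ => by ring)
      simp only [Pi.add_apply, Pi.smul_apply, smul_eq_mul]
      rw [hexp, hxmin, hw, hperp]
      have hss : s ^ 2 * (1 + t ^ 2) = 1 := by
        rw [hs2]; field_simp
      linear_combination hss
    have h1 := hmin _ hunit
    rw [stmt10_expand A xmin w s (s * t)] at h1
    rw [← hm, ← hW, ← hc] at h1
    have h2 : m * (1 + t ^ 2) ≤ (s ^ 2 * m + 2 * s * (s * t) * c + (s * t) ^ 2 * W) * (1 + t ^ 2) := by
      nlinarith [h1]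
    have h3 : (s ^ 2 * m + 2 * s * (s * t) * c + (s * t) ^ 2 * W) * (1 + t ^ 2)
        = m + 2 * t * c + t ^ 2 * W := by
      have hss : s ^ 2 * (1 + t ^ 2) = 1 := by
        rw [hs2]; field_simp
      linear_combination (m + 2 * t * c + t ^ 2 * W) * hss
    rw [h3] at h2
    nlinarith
  have hc0 : c = 0 := by
    have hd : (0:ℝ) < W - m + 1 := by linarith
    have h1 := hkey (-c / (W - m + 1))
    have h1' : 0 ≤ (2 * (-c / (W - m + 1)) * c + (-c / (W - m + 1)) ^ 2 * (W - m))
        * (W - m + 1) ^ 2 := mul_nonneg h1 (by positivity)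
    have e : (2 * (-c / (W - m + 1)) * c + (-c / (W - m + 1)) ^ 2 * (W - m))
        * (W - m + 1) ^ 2 = -c ^ 2 * (W - m + 2) := by
      field_simp
      ring
    rw [e] at h1'
    nlinarith [sq_nonneg c]
  -- expansions of x0 and x1
  have hP0 : ∑ i, (A.mulVec x0 i) ^ 2 = α1 ^ 2 * m + b ^ 2 * W := by
    rw [hdec, stmt10_expand A xmin w α1 b, ← hm, ← hW, ← hc, hc0]; ring
  have hP1 : ∑ i, (A.mulVec x1 i) ^ 2 = b ^ 2 * m + α1 ^ 2 * W := by
    rw [hx1, stmt10_expand A xmin w (-b) α1, ← hm, ← hW, ← hc, hc0]; ring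
  have key : 0 ≤ m + 2 * b ^ 4 * (W - m) := by
    have : 0 ≤ b ^ 4 := by positivity
    nlinarith
  have ha2 : α1 ^ 2 = 1 - b ^ 2 := by linarith
  rw [hP0, hP1, ha2]
  nlinarith [key]
end

section
/- Let b ∈ ℝ^N with b ≥ 0 entrywise, β > 0, and u ∈ (ℝ^r)^N with each block u_i ≠ 0. The minimizer over z ∈ ℝ^{N×r} of (1/2)‖ |z| − b ‖² + (β/2)‖u − z‖_F², where |z|_i = ‖z_i‖ (row norms), is given rowwise by z_i = (u_i/‖u_i‖)·(b_i + β‖u_i‖)/(1+β). -/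
/-!
Since `‖u - z‖ ≥ |‖u‖ - ‖z‖|`, each row objective is bounded below by the one-dimensional quadratic
`t ↦ (t - b)² / 2 + β (‖u‖ - t)² / 2` at `t = ‖z‖`, whose minimum is attained at
`t* = (b + β‖u‖) / (1 + β)`. The candidate row `t* • (u / ‖u‖)` attains exactly this value, because
`t* ≥ 0` and it is aligned with `u`.
-/

open Finset

lemma half_sq_add_half_sq_eq (a b β t : ℝ) (hβ : 1 + β ≠ 0) :
    (1 / 2) * (t - b) ^ 2 + (β / 2) * (a - t) ^ 2
      = (1 / 2) * ((b + β * a) / (1 + β) - b) ^ 2 + (β / 2) * (a - (b + β * a) / (1 + β)) ^ 2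
        + ((1 + β) / 2) * (t - (b + β * a) / (1 + β)) ^ 2 := by
  field_simp
  ring

lemma half_sq_add_half_sq_min (a b β t : ℝ) (hβ : 0 < 1 + β) :
    (1 / 2) * ((b + β * a) / (1 + β) - b) ^ 2 + (β / 2) * (a - (b + β * a) / (1 + β)) ^ 2
      ≤ (1 / 2) * (t - b) ^ 2 + (β / 2) * (a - t) ^ 2 := by
  rw [half_sq_add_half_sq_eq a b β t hβ.ne']
  have : 0 ≤ ((1 + β) / 2) * (t - (b + β * a) / (1 + β)) ^ 2 := by positivity
  linarith

lemma half_sq_add_half_sq_le_of_norm {E : Type*} [SeminormedAddCommGroup E] {b β : ℝ}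
    (hβ : 0 ≤ β) (u z : E) :
    (1 / 2) * (‖z‖ - b) ^ 2 + (β / 2) * (‖u‖ - ‖z‖) ^ 2
      ≤ (1 / 2) * (‖z‖ - b) ^ 2 + (β / 2) * ‖u - z‖ ^ 2 := by
  have : (‖u‖ - ‖z‖) ^ 2 ≤ ‖u - z‖ ^ 2 :=
    sq_le_sq.mpr ((abs_norm_sub_norm_le u z).trans (abs_norm _).ge)
  gcongr

section NormedSpace

variable {E : Type*} [NormedAddCommGroup E] [NormedSpace ℝ E]

lemma norm_smul_inv_norm_smul {c : ℝ} (hc : 0 ≤ c) {u : E} (hu : u ≠ 0) :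
    ‖c • (‖u‖⁻¹ • u)‖ = c := by
  rw [norm_smul, norm_smul, norm_inv, norm_norm, inv_mul_cancel₀ (norm_ne_zero_iff.mpr hu),
    Real.norm_of_nonneg hc, mul_one]

lemma norm_sub_smul_inv_norm_smul (c : ℝ) {u : E} (hu : u ≠ 0) :
    ‖u - c • (‖u‖⁻¹ • u)‖ = |‖u‖ - c| := by
  have hu' : ‖u‖ ≠ 0 := norm_ne_zero_iff.mpr hu
  have : u - c • (‖u‖⁻¹ • u) = ((‖u‖ - c) / ‖u‖) • u := by
    rw [smul_smul, sub_div, div_self hu', sub_smul, one_smul, div_eq_mul_inv]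
  rw [this, norm_smul, Real.norm_eq_abs, abs_div, abs_norm, div_mul_cancel₀ _ hu']

theorem row_objective_min {b β : ℝ} (hb : 0 ≤ b) (hβ : 0 ≤ β) {u : E} (hu : u ≠ 0) (z : E) :
    (1 / 2) * (‖((b + β * ‖u‖) / (1 + β)) • (‖u‖⁻¹ • u)‖ - b) ^ 2
      + (β / 2) * ‖u - ((b + β * ‖u‖) / (1 + β)) • (‖u‖⁻¹ • u)‖ ^ 2
    ≤ (1 / 2) * (‖z‖ - b) ^ 2 + (β / 2) * ‖u - z‖ ^ 2 := by
  have hβ' : 0 < 1 + β := by linarith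
  have ht : 0 ≤ (b + β * ‖u‖) / (1 + β) := by positivity
  rw [norm_smul_inv_norm_smul ht hu, norm_sub_smul_inv_norm_smul _ hu, sq_abs]
  exact (half_sq_add_half_sq_min ‖u‖ b β ‖z‖ hβ').trans (half_sq_add_half_sq_le_of_norm hβ u z)

end NormedSpace

theorem stmt13 {N r : ℕ} (b : Fin N → ℝ) (hb : ∀ i, 0 ≤ b i) (β : ℝ) (hβ : 0 < β)
    (u : Fin N → EuclideanSpace ℝ (Fin r)) (hu : ∀ i, u i ≠ 0) :
    ∀ z : Fin N → EuclideanSpace ℝ (Fin r),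
      (1 / 2) * ∑ i, (‖((b i + β * ‖u i‖) / (1 + β)) • (‖u i‖⁻¹ • u i)‖ - b i) ^ 2
        + (β / 2) * ∑ i, ‖u i - ((b i + β * ‖u i‖) / (1 + β)) • (‖u i‖⁻¹ • u i)‖ ^ 2
      ≤ (1 / 2) * ∑ i, (‖z i‖ - b i) ^ 2 + (β / 2) * ∑ i, ‖u i - z i‖ ^ 2 := by
  intro z
  simp only [mul_sum, ← sum_add_distrib]
  exact sum_le_sum fun i _ => row_objective_min (hb i) hβ.le (hu i) (z i)
end

section
/- Let Q ∈ ℝ^{N×n} with Q^T Q = I_n, z ∈ ℝ^{N×r}, γ > 0, and let Q^T z = U_z D_z V_z^T be a singular value decomposition with singular values in decreasing order. Then y = U_z (D_z + γ e_1 e_1^T) V_z^T minimizes y ↦ (1/2)‖Qy − z‖_F² − γ σ_1(y), where σ_1(y) is the largest singular value of y. -/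
open Matrix
open scoped Matrix.Norms.L2Operator

/-!
Write `A = Qᵀ z = U D Vᵀ` and `‖·‖_F` for the Frobenius norm. Since `Q` has orthonormal columns,
`‖Q y - z‖_F² = ‖y - A‖_F² + ‖Q A - z‖_F²`, so only `½‖y - A‖_F² - γ σ₁(y)` has to be minimised.
The candidate `y⋆ = A + γ u₁ v₁ᵀ` has `‖y⋆ - A‖_F = γ` and `σ₁(y⋆) = σ₁(A) + γ`, while every `y`
satisfies `σ₁(y) ≤ σ₁(A) + ‖y - A‖_F`; with `t = ‖y - A‖_F` it remains to note
`½ t² - γ t ≥ -½ γ²`.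
-/

namespace Matrix

section SumSq

variable {R : Type*} [CommRing R] {l m n : Type*} [Fintype l] [Fintype m] [Fintype n]

theorem sum_sq_eq_trace_transpose_mul_self (A : Matrix m n R) :
    ∑ i, ∑ j, A i j ^ 2 = trace (Aᵀ * A) := by
  simp only [trace, diag, mul_apply, transpose_apply, sq]
  exact Finset.sum_comm

theorem sum_sq_transpose (A : Matrix m n R) : ∑ i, ∑ j, Aᵀ i j ^ 2 = ∑ i, ∑ j, A i j ^ 2 :=
  Finset.sum_comm

theorem sum_sq_mul_of_transpose_mul_self_eq_one [DecidableEq m] {Q : Matrix l m R}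
    (hQ : Qᵀ * Q = 1) (X : Matrix m n R) : ∑ i, ∑ j, (Q * X) i j ^ 2 = ∑ i, ∑ j, X i j ^ 2 := by
  rw [sum_sq_eq_trace_transpose_mul_self, sum_sq_eq_trace_transpose_mul_self, transpose_mul,
    Matrix.mul_assoc, ← Matrix.mul_assoc Qᵀ, hQ, Matrix.one_mul]

theorem sum_sq_orthogonal_mul_mul_transpose [DecidableEq m] [DecidableEq n]
    {U : Matrix m m R} (hU : Uᵀ * U = 1) {V : Matrix n n R} (hV : Vᵀ * V = 1)
    (B : Matrix m n R) : ∑ i, ∑ j, (U * B * Vᵀ) i j ^ 2 = ∑ i, ∑ j, B i j ^ 2 := by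
  rw [Matrix.mul_assoc, sum_sq_mul_of_transpose_mul_self_eq_one hU, ← sum_sq_transpose,
    transpose_mul, transpose_transpose, sum_sq_mul_of_transpose_mul_self_eq_one hV,
    sum_sq_transpose]

theorem sum_sq_add_of_transpose_mul_eq_zero {a b : Matrix m n R} (h : aᵀ * b = 0) :
    ∑ i, ∑ j, (a + b) i j ^ 2 = ∑ i, ∑ j, a i j ^ 2 + ∑ i, ∑ j, b i j ^ 2 := by
  have h' : bᵀ * a = 0 := by rw [← transpose_transpose a, ← transpose_mul, h, transpose_zero]
  simp only [sum_sq_eq_trace_transpose_mul_self, transpose_add, Matrix.add_mul, Matrix.mul_add,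
    h, h', add_zero, zero_add, trace_add]

theorem sum_sq_mul_sub_eq [DecidableEq m] {Q : Matrix l m R} (hQ : Qᵀ * Q = 1)
    (y : Matrix m n R) (z : Matrix l n R) :
    ∑ i, ∑ j, (Q * y - z) i j ^ 2
      = ∑ i, ∑ j, (y - Qᵀ * z) i j ^ 2 + ∑ i, ∑ j, (Q * (Qᵀ * z) - z) i j ^ 2 := by
  have hcross : (Q * (y - Qᵀ * z))ᵀ * (Q * (Qᵀ * z) - z) = 0 := by
    rw [transpose_mul, Matrix.mul_assoc, Matrix.mul_sub, ← Matrix.mul_assoc Qᵀ Q, hQ,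
      Matrix.one_mul, sub_self, Matrix.mul_zero]
  rw [← sum_sq_mul_of_transpose_mul_self_eq_one hQ (y - Qᵀ * z),
    ← sum_sq_add_of_transpose_mul_eq_zero hcross, Matrix.mul_sub, sub_add_sub_cancel]

end SumSq

section L2OpNorm

variable {𝕜 : Type*} [RCLike 𝕜] {l m n : Type*} [Fintype l] [Fintype m] [Fintype n]

theorem l2_opNorm_mul_of_conjTranspose_mul_self_eq_one [DecidableEq m] [DecidableEq n]
    {U : Matrix l m 𝕜} (hU : Uᴴ * U = 1) (M : Matrix m n 𝕜) : ‖U * M‖ = ‖M‖ := by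
  have h : ‖U * M‖ * ‖U * M‖ = ‖M‖ * ‖M‖ := by
    rw [← l2_opNorm_conjTranspose_mul_self, ← l2_opNorm_conjTranspose_mul_self, conjTranspose_mul,
      Matrix.mul_assoc, ← Matrix.mul_assoc Uᴴ, hU, Matrix.one_mul]
  exact (mul_self_inj (norm_nonneg _) (norm_nonneg _)).mp h

theorem norm_entry_le_l2_opNorm [DecidableEq n] (A : Matrix m n 𝕜) (i : m) (j : n) :
    ‖A i j‖ ≤ ‖A‖ := by
  have h := A.l2_opNorm_mulVec (EuclideanSpace.single j 1)
  rw [PiLp.norm_single, norm_one, mul_one] at h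
  refine le_trans ?_ h
  simpa [mulVec_single_one] using
    PiLp.norm_apply_le ((EuclideanSpace.equiv m 𝕜).symm (A *ᵥ Pi.single j 1)) i

end L2OpNorm

section Real

variable {m n : Type*} [Fintype m] [Fintype n]

theorem l2_opNorm_transpose [DecidableEq m] [DecidableEq n] (A : Matrix m n ℝ) :
    ‖Aᵀ‖ = ‖A‖ := by
  rw [← conjTranspose_eq_transpose_of_trivial, l2_opNorm_conjTranspose]

theorem l2_opNorm_orthogonal_mul_mul_transpose [DecidableEq m] [DecidableEq n]
    {U : Matrix m m ℝ} (hU : Uᵀ * U = 1) {V : Matrix n n ℝ} (hV : Vᵀ * V = 1)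
    (B : Matrix m n ℝ) : ‖U * B * Vᵀ‖ = ‖B‖ := by
  rw [← conjTranspose_eq_transpose_of_trivial] at hU hV
  rw [Matrix.mul_assoc, l2_opNorm_mul_of_conjTranspose_mul_self_eq_one hU,
    ← l2_opNorm_transpose, transpose_mul, transpose_transpose,
    ← conjTranspose_eq_transpose_of_trivial B,
    l2_opNorm_mul_of_conjTranspose_mul_self_eq_one hV, l2_opNorm_conjTranspose]

theorem l2_opNorm_le_sqrt_sum_sq [DecidableEq n] (A : Matrix m n ℝ) :
    ‖A‖ ≤ √(∑ i, ∑ j, A i j ^ 2) := by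
  rw [l2_opNorm_def]
  refine ContinuousLinearMap.opNorm_le_bound _ (Real.sqrt_nonneg _) fun x => ?_
  simp only [EuclideanSpace.norm_eq, Real.norm_eq_abs, sq_abs, ← Real.sqrt_mul
    (Finset.sum_nonneg fun i _ => Finset.sum_nonneg fun j _ => sq_nonneg (A i j))]
  refine Real.sqrt_le_sqrt ?_
  rw [Finset.sum_mul]
  refine Finset.sum_le_sum fun i _ => ?_
  simpa [mulVec, dotProduct] using Finset.sum_mul_sq_le_sq_mul_sq Finset.univ (A i) x

theorem half_sum_sq_sub_sub_mul_l2_opNorm_le [DecidableEq n] {A yStar : Matrix m n ℝ} {s γ : ℝ}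
    (hγ : 0 ≤ γ) (hA : ‖A‖ ≤ s) (hyStar : s + γ ≤ ‖yStar‖)
    (hdist : ∑ i, ∑ j, (yStar - A) i j ^ 2 = γ ^ 2) (y : Matrix m n ℝ) :
    (1 / 2) * ∑ i, ∑ j, (yStar - A) i j ^ 2 - γ * ‖yStar‖
      ≤ (1 / 2) * ∑ i, ∑ j, (y - A) i j ^ 2 - γ * ‖y‖ := by
  set G := ∑ i, ∑ j, (y - A) i j ^ 2
  have hG : √G ^ 2 = G :=
    Real.sq_sqrt (Finset.sum_nonneg fun i _ => Finset.sum_nonneg fun j _ => sq_nonneg _)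
  have hy : ‖y‖ ≤ s + √G := calc
    ‖y‖ ≤ ‖A‖ + ‖y - A‖ := norm_le_norm_add_norm_sub' y A
    _ ≤ s + √G := add_le_add hA (l2_opNorm_le_sqrt_sum_sq _)
  rw [hdist]
  nlinarith [sq_nonneg (√G - γ), mul_le_mul_of_nonneg_left hy hγ,
    mul_le_mul_of_nonneg_left hyStar hγ]

end Real

theorem l2_opNorm_le_of_offDiag_eq_zero_of_abs_le {n r : ℕ} {D : Matrix (Fin n) (Fin r) ℝ}
    (hdiag : ∀ (i : Fin n) (j : Fin r), (i : ℕ) ≠ j → D i j = 0) {c : ℝ} (hc : 0 ≤ c)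
    (hle : ∀ i j, |D i j| ≤ c) :
    ‖D‖ ≤ c := by
  have hgram : Dᵀ * D = diagonal fun j => ∑ i, D i j ^ 2 := by
    ext j j'
    rw [mul_apply]
    by_cases h : j = j'
    · subst h
      simp [sq]
    · rw [diagonal_apply_ne _ h]
      refine Finset.sum_eq_zero fun i _ => ?_
      by_cases hij : (i : ℕ) = j
      · rw [hdiag i j' (hij ▸ Fin.val_ne_of_ne h), mul_zero]
      · rw [transpose_apply, hdiag i j hij, zero_mul]
  have hcol : ∀ j, ∑ i, D i j ^ 2 ≤ c ^ 2 := by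
    intro j
    by_cases hj : (j : ℕ) < n
    · rw [Finset.sum_eq_single ⟨j, hj⟩ (fun i _ hi => by
        rw [hdiag i j fun h => hi (Fin.ext h), zero_pow two_ne_zero]) (by simp)]
      exact sq_le_sq.mpr ((abs_of_nonneg hc).symm ▸ hle _ _)
    · rw [Finset.sum_eq_zero fun i _ => by rw [hdiag i j (by omega), zero_pow two_ne_zero]]
      positivity
  have hsq : ‖D‖ * ‖D‖ ≤ c * c := by
    rw [← l2_opNorm_conjTranspose_mul_self, conjTranspose_eq_transpose_of_trivial, hgram,
      l2_opNorm_diagonal]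
    refine (pi_norm_le_iff_of_nonneg (mul_nonneg hc hc)).mpr fun j => ?_
    rw [Real.norm_of_nonneg (Finset.sum_nonneg fun i _ => sq_nonneg _), ← sq]
    exact hcol j
  exact (mul_self_le_mul_self_iff (norm_nonneg _) hc).mpr hsq

end Matrix

theorem stmt14 {N n r : ℕ} (hn : 0 < n) (hr : 0 < r)
    (Q : Matrix (Fin N) (Fin n) ℝ) (hQ : Qᵀ * Q = 1)
    (z : Matrix (Fin N) (Fin r) ℝ) (γ : ℝ) (hγ : 0 < γ)
    (U : Matrix (Fin n) (Fin n) ℝ) (hU : Uᵀ * U = 1)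
    (V : Matrix (Fin r) (Fin r) ℝ) (hV : Vᵀ * V = 1)
    (D : Matrix (Fin n) (Fin r) ℝ)
    (hDdiag : ∀ (i : Fin n) (j : Fin r), (i : ℕ) ≠ (j : ℕ) → D i j = 0)
    (hDpos : ∀ (i : Fin n) (j : Fin r), 0 ≤ D i j)
    (hDdec : ∀ (i i' : Fin n) (j j' : Fin r), (i : ℕ) = (j : ℕ) → (i' : ℕ) = (j' : ℕ) →
      i ≤ i' → D i' j' ≤ D i j)
    (hSVD : Qᵀ * z = U * D * Vᵀ) :
    ∀ y : Matrix (Fin n) (Fin r) ℝ,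
      (1 / 2) * (∑ i, ∑ j,
          ((Q * (U * (D + single (⟨0, hn⟩ : Fin n) (⟨0, hr⟩ : Fin r) γ) * Vᵀ) - z) i j) ^ 2)
          - γ * ‖U * (D + single (⟨0, hn⟩ : Fin n) (⟨0, hr⟩ : Fin r) γ) * Vᵀ‖
      ≤ (1 / 2) * (∑ i, ∑ j, ((Q * y - z) i j) ^ 2) - γ * ‖y‖ := by
  intro y
  set i₀ : Fin n := ⟨0, hn⟩
  set j₀ : Fin r := ⟨0, hr⟩
  have hσ₁ : ∀ i j, |D i j| ≤ D i₀ j₀ := fun i j => by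
    rw [abs_of_nonneg (hDpos i j)]
    by_cases hij : (i : ℕ) = j
    · exact hDdec i₀ i j₀ j rfl hij (Nat.zero_le _)
    · exact hDdiag i j hij ▸ hDpos i₀ j₀
  have hA : ‖U * D * Vᵀ‖ ≤ D i₀ j₀ := by
    rw [l2_opNorm_orthogonal_mul_mul_transpose hU hV]
    exact l2_opNorm_le_of_offDiag_eq_zero_of_abs_le hDdiag (hDpos i₀ j₀) hσ₁
  have hyStar : D i₀ j₀ + γ ≤ ‖U * (D + single i₀ j₀ γ) * Vᵀ‖ := by
    rw [l2_opNorm_orthogonal_mul_mul_transpose hU hV]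
    simpa using le_of_abs_le ((D + single i₀ j₀ γ).norm_entry_le_l2_opNorm i₀ j₀)
  have hdist : ∑ i, ∑ j, (U * (D + single i₀ j₀ γ) * Vᵀ - U * D * Vᵀ) i j ^ 2 = γ ^ 2 := by
    rw [Matrix.mul_add, Matrix.add_mul, add_sub_cancel_left,
      sum_sq_orthogonal_mul_mul_transpose hU hV]
    simp [single_apply, ite_pow, ite_and]
  rw [sum_sq_mul_sub_eq hQ, sum_sq_mul_sub_eq hQ y, hSVD]
  linarith [half_sum_sq_sub_sub_mul_l2_opNorm_le hγ.le hA hyStar hdist y]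
end

section
/- Let Q ∈ ℝ^{N×n} with Q^T Q = I_n and (QQ^T)_{jj} = n/N for all j. Let F be a positive diagonal N×N matrix with diagonal μ_1,...,μ_N, and define F' by F'_{jj} = (N/n)(Q(Q^T F^{−1} Q)^{−1} Q^T)_{jj}. Then trace(F') ≤ trace(F). -/
/-!
Write `F = diagonal μ` and `M = Qᵀ F⁻¹ Q`. The matrices `X = F^{-1/2} Q` and `Y = F^{1/2} Q`
satisfy `Xᵀ Y = Qᵀ Q = 1` and `Xᵀ X = M`, so `X M⁻¹` is the orthogonal projection of `Y` onto
the column space of `X`, and the Gram matrix `Yᵀ Y - M⁻¹` of the residual is positive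
semidefinite. Taking traces, `tr (Q M⁻¹ Qᵀ) = tr M⁻¹ ≤ tr (Qᵀ F Q) = ∑ⱼ (Q Qᵀ)ⱼⱼ μⱼ`, which is
`(n / N) ∑ⱼ μⱼ` by the hypothesis on the diagonal of `Q Qᵀ`.
-/

open Matrix

lemma transpose_diagonal_mul_mul_diagonal_mul {m n R : Type*} [Fintype m] [DecidableEq m]
    [CommSemiring R] (a b : m → R) (Q : Matrix m n R) :
    (diagonal a * Q)ᵀ * (diagonal b * Q) = Qᵀ * diagonal (a * b) * Q := by
  rw [transpose_mul, diagonal_transpose, Matrix.mul_assoc, ← Matrix.mul_assoc (diagonal a),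
    diagonal_mul_diagonal, ← Matrix.mul_assoc]
  rfl

lemma trace_transpose_mul_diagonal_mul {m n R : Type*} [Fintype m] [Fintype n] [DecidableEq m]
    [CommSemiring R] (d : m → R) (Q : Matrix m n R) :
    (Qᵀ * diagonal d * Q).trace = ∑ j, d j * (Q * Qᵀ) j j := by
  rw [trace_mul_cycle, trace]
  simp only [diag, mul_diagonal]
  exact Finset.sum_congr rfl fun j _ => mul_comm _ _

theorem trace_inv_transpose_mul_self_le {m n : Type*} [Fintype m] [Fintype n] [DecidableEq n]
    (X Y : Matrix m n ℝ) (hXY : Xᵀ * Y = 1) :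
    (Xᵀ * X)⁻¹.trace ≤ (Yᵀ * Y).trace := by
  set M := Xᵀ * X
  have hYX : Yᵀ * X = 1 := by simpa using congrArg transpose hXY
  have hX : Function.Injective X.mulVec := fun v w h => by
    simpa [mulVec_mulVec, hYX] using congrArg (Yᵀ *ᵥ ·) h
  have hM : IsUnit M.det := by
    simpa [isUnit_iff_isUnit_det, conjTranspose_eq_transpose_of_trivial] using
      (PosDef.conjTranspose_mul_self X hX).isUnit
  have hMsymm : (M⁻¹)ᵀ = M⁻¹ := by
    rw [transpose_nonsing_inv, transpose_mul, transpose_transpose]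
  have hresidual : (Y - X * M⁻¹)ᵀ * (Y - X * M⁻¹) = Yᵀ * Y - M⁻¹ := by
    rw [transpose_sub, transpose_mul, hMsymm, Matrix.sub_mul, Matrix.mul_sub, Matrix.mul_sub,
      ← Matrix.mul_assoc Yᵀ, hYX, Matrix.one_mul, Matrix.mul_assoc M⁻¹ Xᵀ Y, hXY,
      Matrix.mul_one, Matrix.mul_assoc M⁻¹, ← Matrix.mul_assoc Xᵀ,
      nonsing_inv_mul_cancel_left _ _ hM]
    abel
  have hnonneg := (posSemidef_conjTranspose_mul_self (Y - X * M⁻¹)).trace_nonneg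
  rw [conjTranspose_eq_transpose_of_trivial, hresidual, trace_sub] at hnonneg
  linarith

theorem trace_inv_transpose_mul_diagonal_inv_mul_le {m n : Type*} [Fintype m] [Fintype n]
    [DecidableEq m] [DecidableEq n] (Q : Matrix m n ℝ) (hQ : Qᵀ * Q = 1) (d : m → ℝ)
    (hd : ∀ j, 0 < d j) :
    (Qᵀ * diagonal (fun j => (d j)⁻¹) * Q)⁻¹.trace ≤ (Qᵀ * diagonal d * Q).trace := by
  have hsqrt : (fun j => √(d j)) * (fun j => √(d j)) = d :=
    funext fun j => Real.mul_self_sqrt (hd j).le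
  have hsqrt_inv : (fun j => (√(d j))⁻¹) * (fun j => (√(d j))⁻¹) = fun j => (d j)⁻¹ :=
    funext fun j => by simp [← mul_inv, Real.mul_self_sqrt (hd j).le]
  have hsqrt_inv_mul : (fun j => (√(d j))⁻¹) * (fun j => √(d j)) = fun _ => 1 :=
    funext fun j => inv_mul_cancel₀ (Real.sqrt_pos.2 (hd j)).ne'
  have hXY : (diagonal (fun j => (√(d j))⁻¹) * Q)ᵀ * (diagonal (fun j => √(d j)) * Q) = 1 := by
    rw [transpose_diagonal_mul_mul_diagonal_mul, hsqrt_inv_mul, diagonal_one, Matrix.mul_one, hQ]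
  simpa only [transpose_diagonal_mul_mul_diagonal_mul, hsqrt, hsqrt_inv] using
    trace_inv_transpose_mul_self_le _ _ hXY

theorem stmt17_general {N n : ℕ}
    (Q : Matrix (Fin N) (Fin n) ℝ) (hQ : Qᵀ * Q = 1)
    (hrow : ∀ j, (Q * Qᵀ) j j = (n : ℝ) / N)
    (μ : Fin N → ℝ) (hμ : ∀ j, 0 < μ j) :
    ((N : ℝ) / n) *
      (Q * (Qᵀ * diagonal (fun j => (μ j)⁻¹) * Q)⁻¹ * Qᵀ).trace
      ≤ ∑ j, μ j := by
  have htrace_cycle : (Q * (Qᵀ * diagonal (fun j => (μ j)⁻¹) * Q)⁻¹ * Qᵀ).trace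
      = (Qᵀ * diagonal (fun j => (μ j)⁻¹) * Q)⁻¹.trace := by
    rw [trace_mul_cycle, hQ, Matrix.one_mul]
  have hgram : (Qᵀ * diagonal μ * Q).trace = (n : ℝ) / N * ∑ j, μ j := by
    rw [trace_transpose_mul_diagonal_mul, Finset.mul_sum]
    exact Finset.sum_congr rfl fun j _ => by rw [hrow, mul_comm]
  -- `≤` rather than `=`: the product is `0` when `n = 0` or `N = 0`.
  have hscale : (N : ℝ) / n * ((n : ℝ) / N) ≤ 1 := by
    rw [div_mul_div_comm, mul_comm (n : ℝ)]
    exact div_self_le_one _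
  calc (N : ℝ) / n * (Q * (Qᵀ * diagonal (fun j => (μ j)⁻¹) * Q)⁻¹ * Qᵀ).trace
      ≤ (N : ℝ) / n * ((n : ℝ) / N * ∑ j, μ j) := by
        rw [htrace_cycle, ← hgram]
        gcongr
        exact trace_inv_transpose_mul_diagonal_inv_mul_le Q hQ μ hμ
    _ ≤ ∑ j, μ j := by
        rw [← mul_assoc]
        exact mul_le_of_le_one_left (Finset.sum_nonneg fun j _ => (hμ j).le) hscale

theorem stmt17 {N n : ℕ} (hn : 0 < n) (hN : 0 < N)
    (Q : Matrix (Fin N) (Fin n) ℝ) (hQ : Qᵀ * Q = 1)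
    (hrow : ∀ j, (Q * Qᵀ) j j = (n : ℝ) / N)
    (μ : Fin N → ℝ) (hμ : ∀ j, 0 < μ j) :
    ((N : ℝ) / n) *
      (Q * (Qᵀ * diagonal (fun j => (μ j)⁻¹) * Q)⁻¹ * Qᵀ).trace
      ≤ ∑ j, μ j :=
  stmt17_general Q hQ hrow μ hμ
end

section
/- Fix x_0 ∈ ℝ^n nonzero and let A ∈ ℝ^{(n+1)×n} have rows a_1,...,a_{n+1} drawn independently from a continuous distribution on the unit sphere. Then almost surely, the only solutions x of |Ax| = |Ax_0| (entrywise) are x = ±x_0. Deterministic core: if A_1 ∈ ℝ^{n×n} is invertible, c ∈ ℝ^n, a_{n+1} = c^T A_1, and x̂ satisfies |A_1 x̂| = |A_1 x_0| and |a_{n+1}·x̂| = |a_{n+1}·x_0|, and additionally c·y ≠ 0 for every nonzero y of the form y_i ∈ {±2(A_1 x_0)_i, 0}, then x̂ = ±x_0. -/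
open Matrix

theorem stmt19 {n : ℕ} (A1 : Matrix (Fin n) (Fin n) ℝ) (hA1 : IsUnit A1.det)
    (c x0 xhat : Fin n → ℝ) (a : Fin n → ℝ) (ha : a = A1ᵀ.mulVec c)
    (hmag : ∀ i, |A1.mulVec xhat i| = |A1.mulVec x0 i|)
    (hlast : |a ⬝ᵥ xhat| = |a ⬝ᵥ x0|)
    (hgen : ∀ y : Fin n → ℝ,
      (∀ i, y i = 2 * A1.mulVec x0 i ∨ y i = -(2 * A1.mulVec x0 i) ∨ y i = 0) →
      y ≠ 0 → c ⬝ᵥ y ≠ 0) :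
    xhat = x0 ∨ xhat = -x0 := by
  have hinj : Function.Injective A1.mulVec := mulVec_injective_iff_isUnit.2 ((Matrix.isUnit_iff_isUnit_det A1).2 hA1)
  set b := A1.mulVec x0 with hb
  set v := A1.mulVec xhat with hv
  have hdot : ∀ x : Fin n → ℝ, a ⬝ᵥ x = c ⬝ᵥ A1.mulVec x := by
    intro x
    rw [ha, mulVec_transpose, ← dotProduct_mulVec]
  have hsign : ∀ i, v i = b i ∨ v i = -b i := fun i => abs_eq_abs.mp (hmag i)
  have hcv : c ⬝ᵥ v = c ⬝ᵥ b ∨ c ⬝ᵥ v = -(c ⬝ᵥ b) := by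
    have := hlast; rw [hdot, hdot] at this; exact abs_eq_abs.mp this
  rcases hcv with h | h
  · left
    apply hinj
    have hy : v - b = 0 := by
      by_contra hne
      apply hgen (v - b) _ hne
      · simp [dotProduct_sub, h]
      · intro i
        rcases hsign i with hi | hi
        · right; right; simp [hi]
        · right; left; simp [hi]; ring
    have : v = b := by rwa [sub_eq_zero] at hy
    exact this
  · right
    apply hinj
    have hy : v + b = 0 := by
      by_contra hne
      apply hgen (v + b) _ hne
      · simp [dotProduct_add, h]
      · intro i
        rcases hsign i with hi | hi
        · left; simp [hi]; ring
        · right; right; simp [hi]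
    have : v = -b := by rwa [add_eq_zero_iff_eq_neg] at hy
    rw [hv, hb] at this
    simpa [mulVec_neg] using this
end
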